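/- arXiv:2205.03577 — 10 statements merged into one kernel-verified Lean document; each statement's English description precedes it below -/
import Mathlib

section
/- Let D be a linear map from polynomials to ℝ such that |D(r·p_i)| ≤ 1 for all i ∈ [m] and all monomials r. Then any Nullstellensatz proof 1 = ∑_{i=1}^{m} p_i q_i has total coefficient size ∑_{i=1}^{m} T(q_i) ≥ D(1), where T(q) is the sum of absolute values of the coefficients of q. -/
namespace MvPolynomial

variable {σ R M : Type*}

theorem mul_eq_sum_coeff_smul_monomial_mul [CommSemiring R] (p q : MvPolynomial σ R) :
    p * q = ∑ r ∈ q.support, q.coeff r • (monomial r 1 * p) := by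
  conv_lhs => rw [q.as_sum, Finset.mul_sum]
  refine Finset.sum_congr rfl fun r _ => ?_
  rw [← smul_mul_assoc, smul_monomial, smul_eq_mul, mul_one, mul_comm]

theorem linearMap_mul_eq_sum_coeff_smul [CommSemiring R] [AddCommMonoid M] [Module R M]
    (D : MvPolynomial σ R →ₗ[R] M) (p q : MvPolynomial σ R) :
    D (p * q) = ∑ r ∈ q.support, q.coeff r • D (monomial r 1 * p) := by
  simp only [mul_eq_sum_coeff_smul_monomial_mul p q, map_sum, map_smul]

theorem linearMap_mul_le_sum_abs_coeff [CommRing R] [LinearOrder R] [IsStrictOrderedRing R]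
    (D : MvPolynomial σ R →ₗ[R] R) {p : MvPolynomial σ R}
    (hD : ∀ r, |D (monomial r 1 * p)| ≤ 1) (q : MvPolynomial σ R) :
    D (p * q) ≤ ∑ r ∈ q.support, |q.coeff r| := by
  rw [linearMap_mul_eq_sum_coeff_smul]
  refine Finset.sum_le_sum fun r _ => ?_
  calc q.coeff r • D (monomial r 1 * p)
      ≤ |q.coeff r * D (monomial r 1 * p)| := le_abs_self _
    _ = |q.coeff r| * |D (monomial r 1 * p)| := abs_mul _ _
    _ ≤ |q.coeff r| := mul_le_of_le_one_right (abs_nonneg _) (hD r)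

end MvPolynomial

/-- If D is a linear functional on polynomials with |D(r·p_i)| ≤ 1 for all
axioms p_i and monomials r, then any Nullstellensatz proof 1 = ∑ p_i q_i has total
coefficient size ∑ T(q_i) ≥ D(1). -/
theorem stmt2 {σ : Type*} (m : ℕ) (D : MvPolynomial σ ℝ →ₗ[ℝ] ℝ)
    (p q : Fin m → MvPolynomial σ ℝ)
    (hD : ∀ i : Fin m, ∀ r : σ →₀ ℕ, |D (MvPolynomial.monomial r 1 * p i)| ≤ 1)
    (hproof : (1 : MvPolynomial σ ℝ) = ∑ i : Fin m, p i * q i) :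
    D 1 ≤ ∑ i : Fin m, ∑ r ∈ (q i).support, |(q i).coeff r| := by
  rw [hproof, map_sum]
  exact Finset.sum_le_sum fun i _ =>
    MvPolynomial.linearMap_mul_le_sum_abs_coeff D (hD i) (q i)
end

section
/- Let D: {0,1}^N → ℝ and extend D to a linear functional on functions f: {0,1}^N → ℝ by D(f) = ∑_{x} f(x)D(x). If p is a Nullstellensatz refutation of a system of Boolean axioms p_i (i.e., ∑_i p_i q_i = 1 as functions on {0,1}^N) and |D(r·p_i)| ≤ 1 for every i and every monomial r (products of variables and their negations), then ∑_i T(q_i) ≥ D(1). -/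
/-!
Pairing the refutation identity `∑ᵢ pᵢ qᵢ = 1` with `D` and expanding each `qᵢ` in monomials
writes `D(1)` as `∑ᵢ ∑ c · D(r pᵢ)`; every `|D(r pᵢ)| ≤ 1`, so each term is at most `|c|`.
-/

/-- The Boolean monomial ∏_{i∈S} x_i · ∏_{j∈T} (1 - x_j), as a real-valued function
on assignments x ∈ {0,1}^N. -/
noncomputable def boolMono (N : ℕ) (S T : Finset (Fin N)) (x : Fin N → Bool) : ℝ :=
  (∏ i ∈ S, if x i then (1 : ℝ) else 0) * ∏ j ∈ T, if x j then (0 : ℝ) else 1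

open Finset

lemma sum_eq_sum_sum_mul_sum_of_sum_sum_mul_eq_one {α ι κ : Type*} [Fintype α]
    (s : Finset ι) (t : Finset κ) (c : ι → κ → ℝ) (f : ι → κ → α → ℝ) (D : α → ℝ)
    (h : ∀ x, ∑ i ∈ s, ∑ k ∈ t, c i k * f i k x = 1) :
    ∑ x, D x = ∑ i ∈ s, ∑ k ∈ t, c i k * ∑ x, f i k x * D x := by
  calc ∑ x, D x = ∑ x, (∑ i ∈ s, ∑ k ∈ t, c i k * f i k x) * D x := by simp only [h, one_mul]
    _ = ∑ i ∈ s, ∑ k ∈ t, c i k * ∑ x, f i k x * D x := by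
      simp_rw [sum_mul, mul_sum, mul_assoc]
      rw [sum_comm]
      exact sum_congr rfl fun i _ => sum_comm

lemma sum_mul_le_sum_abs_of_abs_le_one {κ : Type*} (t : Finset κ) (c a : κ → ℝ)
    (ha : ∀ k ∈ t, |a k| ≤ 1) : ∑ k ∈ t, c k * a k ≤ ∑ k ∈ t, |c k| :=
  sum_le_sum fun k hk =>
    calc c k * a k ≤ |c k| * |a k| := abs_mul (c k) (a k) ▸ le_abs_self _
      _ ≤ |c k| := mul_le_of_le_one_right (abs_nonneg _) (ha k hk)

/-- If ∑_i p_i q_i = 1 on {0,1}^N, where each q_i = ∑_{(S,T)} c_i(S,T)·mono(S,T)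
is a combination of monomials, and the linear functional D(f) = ∑_x f(x) D(x) satisfies
|D(r · p_i)| ≤ 1 for every axiom p_i and monomial r, then ∑_i T(q_i) ≥ D(1). -/
theorem stmt3 (N m : ℕ) (D : (Fin N → Bool) → ℝ)
    (p : Fin m → (Fin N → Bool) → ℝ)
    (W : Finset (Finset (Fin N) × Finset (Fin N)))
    (hWdisj : ∀ st ∈ W, Disjoint st.1 st.2)
    (c : Fin m → Finset (Fin N) × Finset (Fin N) → ℝ)
    (hD : ∀ i : Fin m, ∀ S T : Finset (Fin N), Disjoint S T →
      |∑ x : Fin N → Bool, boolMono N S T x * p i x * D x| ≤ 1)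
    (hproof : ∀ x : Fin N → Bool,
      ∑ i : Fin m, ∑ st ∈ W, c i st * boolMono N st.1 st.2 x * p i x = 1) :
    ∑ x : Fin N → Bool, D x ≤ ∑ i : Fin m, ∑ st ∈ W, |c i st| := by
  have hproof' : ∀ x, ∑ i, ∑ st ∈ W, c i st * (boolMono N st.1 st.2 x * p i x) = 1 := by
    simpa only [mul_assoc] using hproof
  rw [sum_eq_sum_sum_mul_sum_of_sum_sum_mul_eq_one _ _ _ _ D hproof']
  exact sum_le_sum fun i _ => sum_mul_le_sum_abs_of_abs_le_one W _ _
    fun st hst => hD i st.1 st.2 (hWdisj st hst)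
end

section
/- Define D = ∑_{S ⊊ [n]} c_S J_S where c_S = (-1)^{n-1-|S|}(n-1-|S|)!/(n-1)^{n-1-|S|} and J_S is the indicator that the pigeons in S go to distinct holes, under the uniform distribution on assignments of n pigeons to n-1 holes. If p is any function of the assignment that does not depend on the hole of pigeon i, then E[D·p] = E[J_{[n]\{i}}·p]. -/
/-- J_S: indicator that all pigeons in S go to distinct holes under assignment x. -/
noncomputable def Jind (n : ℕ) (S : Finset (Fin n)) (x : Fin n → Fin (n - 1)) : ℝ :=
  if Set.InjOn x S then 1 else 0

/-- The coefficient c_S = (-1)^{n-1-|S|} (n-1-|S|)! / (n-1)^{n-1-|S|}. -/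
noncomputable def cCoef (n : ℕ) (S : Finset (Fin n)) : ℝ :=
  (-1) ^ (n - 1 - S.card) * (Nat.factorial (n - 1 - S.card) : ℝ) /
    ((n : ℝ) - 1) ^ (n - 1 - S.card)

/-- The dual solution D = ∑_{S ⊊ [n]} c_S J_S as a function on assignments. -/
noncomputable def Dfun (n : ℕ) (x : Fin n → Fin (n - 1)) : ℝ :=
  ∑ S ∈ Finset.univ.filter (fun S : Finset (Fin n) => S ≠ Finset.univ),
    cCoef n S * Jind n S x


/-!
Write `E_S = E[J_S p]`. When `i ∉ S` and `p` ignores pigeon `i`, resampling the hole of `i`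
gives `(n - 1) E_{S ∪ {i}} = (n - 1 - |S|) E_S`: once `S` is placed injectively, exactly
`n - 1 - |S|` holes are left free for `i`. The coefficients satisfy
`(n - 1 - |S|) c_{S ∪ {i}} = -(n - 1) c_S`, so in `E[D p] = ∑_{S ⊊ [n]} c_S E_S` the terms for
`S` and `S ∪ {i}` cancel for every `S ⊊ [n] ∖ {i}`, and only
`c_{[n]∖{i}} E_{[n]∖{i}} = E_{[n]∖{i}}` survives.
-/

open Finset Function

section Update

variable {α β M : Type*} [DecidableEq α]

theorem involutive_update_swap (i : α) :
    Involutive fun q : (α → β) × β => (update q.1 i q.2, q.1 i) := by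
  intro q
  simp

theorem sum_sum_update [Fintype α] [Fintype β] [AddCommMonoid M] (i : α)
    (f : (α → β) → M) :
    ∑ x : α → β, ∑ b, f (update x i b) = Fintype.card β • ∑ x, f x := by
  rw [← Fintype.sum_prod_type' (fun x b => f (update x i b)),
    ← Equiv.sum_comp (involutive_update_swap i).toPerm, Fintype.sum_prod_type, sum_comm]
  simp

theorem injOn_update_insert_iff [DecidableEq β] {x : α → β} {i : α} {S : Finset α}
    (hi : i ∉ S) (b : β) :
    Set.InjOn (update x i b) (insert i S : Finset α) ↔ Set.InjOn x S ∧ b ∉ S.image x := by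
  have heq : Set.EqOn (update x i b) x S := fun j hj =>
    update_of_ne (ne_of_mem_of_not_mem hj hi) _ _
  rw [coe_insert, Set.injOn_insert (mod_cast hi), update_self, Set.image_congr heq,
    heq.injOn_iff, ← coe_image, mem_coe]

theorem card_filter_injOn_update_insert [DecidableEq β] [Fintype β] {x : α → β} {i : α}
    {S : Finset α} (hi : i ∉ S) (hx : Set.InjOn x S) :
    #{b | Set.InjOn (update x i b) (insert i S : Finset α)} = Fintype.card β - #S := by
  simp only [injOn_update_insert_iff hi, hx, true_and]
  rw [filter_not, filter_mem_eq_inter, univ_inter, ← compl_eq_univ_sdiff, card_compl,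
    card_image_of_injOn hx]

theorem card_smul_sum_injOn_insert [Fintype α] [DecidableEq β] [Fintype β] [AddCommMonoid M]
    {i : α} {S : Finset α} (hi : i ∉ S) (p : (α → β) → M)
    (hp : ∀ x b, p (update x i b) = p x) :
    Fintype.card β • ∑ x with Set.InjOn x (insert i S : Finset α), p x =
      (Fintype.card β - #S) • ∑ x with Set.InjOn x S, p x := by
  rw [sum_filter, ← sum_sum_update i, sum_filter, smul_sum]
  refine sum_congr rfl fun x _ => ?_
  simp only [hp]
  split_ifs with hx
  · rw [← sum_filter, sum_const, card_filter_injOn_update_insert hi hx]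
  · simp only [injOn_update_insert_iff hi, hx, false_and, if_false, sum_const_zero,
      smul_zero]

end Update

theorem sum_filter_ne_univ_eq_of_add_insert_eq_zero {α M : Type*} [Fintype α] [DecidableEq α]
    [AddCommGroup M] (i : α) (g : Finset α → M)
    (hg : ∀ S ⊂ univ.erase i, g S + g (insert i S) = 0) :
    ∑ S ∈ univ.filter (fun S => S ≠ univ), g S = g (univ.erase i) := by
  have hT : insert i (univ.erase i) = univ := insert_erase (mem_univ i)
  have hpairs : ∑ S ∈ (univ.erase i).powerset, (g S + g (insert i S)) =
      g (univ.erase i) + g univ := by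
    rw [sum_eq_single_of_mem _ (mem_powerset_self _) fun S hS hne =>
      hg S (ssubset_of_subset_of_ne (mem_powerset.mp hS) hne), hT]
  rw [filter_ne', sum_erase_eq_sub (mem_univ _), ← powerset_univ]
  conv_lhs => rw [← hT]
  rw [sum_powerset_insert (notMem_erase i univ), ← sum_add_distrib, hpairs, hT,
    add_sub_cancel_right]

theorem natCast_sub_one_ne_zero {n : ℕ} (hn : 2 ≤ n) : (n : ℝ) - 1 ≠ 0 := by
  have : (2 : ℝ) ≤ n := mod_cast hn
  linarith

theorem cCoef_insert_mul {n : ℕ} (hn : 2 ≤ n) {i : Fin n} {S : Finset (Fin n)} (hi : i ∉ S)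
    (hS : #S < n - 1) :
    cCoef n (insert i S) * ((n - 1 - #S : ℕ) : ℝ) = -((n : ℝ) - 1) * cCoef n S := by
  obtain ⟨k, hk⟩ : ∃ k, n - 1 - #S = k + 1 := ⟨n - 2 - #S, by omega⟩
  have hk' : n - 1 - #(insert i S) = k := by rw [card_insert_of_notMem hi]; omega
  simp only [cCoef, hk, hk', Nat.factorial_succ]
  push_cast
  field_simp [natCast_sub_one_ne_zero hn]
  ring

theorem cCoef_mul_add_cCoef_insert_mul {n : ℕ} (hn : 2 ≤ n) {i : Fin n} {S : Finset (Fin n)}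
    (hi : i ∉ S) (hS : #S < n - 1) {A B : ℝ}
    (hAB : ((n : ℝ) - 1) * B = ((n - 1 - #S : ℕ) : ℝ) * A) :
    cCoef n S * A + cCoef n (insert i S) * B = 0 := by
  refine mul_left_cancel₀ (natCast_sub_one_ne_zero hn) ?_
  linear_combination cCoef n (insert i S) * hAB + A * cCoef_insert_mul hn hi hS

theorem cCoef_of_card_eq {n : ℕ} {S : Finset (Fin n)} (hS : #S = n - 1) : cCoef n S = 1 := by
  simp [cCoef, hS]

theorem sum_jind_mul {n : ℕ} (S : Finset (Fin n)) (p : (Fin n → Fin (n - 1)) → ℝ) :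
    ∑ x, Jind n S x * p x = ∑ x with Set.InjOn x S, p x := by
  simp only [Jind, ite_mul, one_mul, zero_mul, sum_filter]

/-- If p does not depend on the hole of pigeon i, then
E[D·p] = E[J_{[n]∖{i}}·p] (expectations over uniform assignments of n pigeons
to n-1 holes). -/
theorem stmt4 (n : ℕ) (hn : 2 ≤ n) (i : Fin n) (p : (Fin n → Fin (n - 1)) → ℝ)
    (hp : ∀ x y : Fin n → Fin (n - 1), (∀ j : Fin n, j ≠ i → x j = y j) → p x = p y) :
    (∑ x : Fin n → Fin (n - 1), Dfun n x * p x) / ((n : ℝ) - 1) ^ n =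
      (∑ x : Fin n → Fin (n - 1), Jind n (Finset.univ.erase i) x * p x) /
        ((n : ℝ) - 1) ^ n := by
  have hp_update (x : Fin n → Fin (n - 1)) (b : Fin (n - 1)) : p (update x i b) = p x :=
    hp _ _ fun j hj => update_of_ne hj _ _
  have hswap : ∑ x, Dfun n x * p x =
      ∑ S ∈ univ.filter (fun S => S ≠ univ), cCoef n S * ∑ x with Set.InjOn x S, p x := by
    simp only [Dfun, sum_mul]
    rw [sum_comm]
    simp only [mul_assoc, ← mul_sum, sum_jind_mul]
  rw [hswap, sum_filter_ne_univ_eq_of_add_insert_eq_zero i _ fun S hS => ?_,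
    cCoef_of_card_eq (by simp), one_mul, sum_jind_mul]
  have hi : i ∉ S := fun h => notMem_erase i univ (hS.subset h)
  refine cCoef_mul_add_cCoef_insert_mul hn hi ((card_lt_card hS).trans_eq (by simp)) ?_
  have hcount := card_smul_sum_injOn_insert hi p hp_update
  simp only [nsmul_eq_mul, Fintype.card_fin] at hcount
  rw [← hcount, Nat.cast_sub (by omega : 1 ≤ n), Nat.cast_one]
end

section
/- With D = ∑_{S ⊊ [n]} c_S J_S where c_S = (-1)^{n-1-|S|}(n-1-|S|)!/(n-1)^{n-1-|S|}, the expectation of D over a uniform assignment of n pigeons to n-1 holes equals (n-2)!/(n-1)^{n-2}. -/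
open Finset

theorem Nat.card_subtype_injOn {α β : Type*} [Fintype α] [Fintype β] (s : Finset α) :
    Nat.card {f : α → β // Set.InjOn f s} =
      (Fintype.card β).descFactorial #s * Fintype.card β ^ (Fintype.card α - #s) := by
  classical
  let e : {f : α → β // Set.InjOn f s} ≃ (s ↪ β) × ({a // a ∉ s} → β) :=
    ((Equiv.subtypeEquiv (Equiv.piEquivPiSubtypeProd (· ∈ s) fun _ => β)
      fun _ => Set.injOn_iff_injective).trans Equiv.prodSubtypeFstEquivSubtypeProd).trans
      ((Equiv.subtypeInjectiveEquivEmbedding _ _).prodCongr (Equiv.refl _))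
  rw [Nat.card_congr e,
    Nat.card_eq_fintype_card, Fintype.card_prod, Fintype.card_embedding_eq, Fintype.card_fun,
    Fintype.card_subtype_compl, Fintype.card_coe]

theorem sum_range_neg_one_pow_sub_mul_choose {R : Type*} [CommRing R] {n : ℕ} (hn : n ≠ 0) :
    ∑ j ∈ range n, (-1 : R) ^ (n - 1 - j) * n.choose j = 1 := by
  have h := add_pow (1 : R) (-1) n
  rw [add_neg_cancel, zero_pow hn, sum_range_succ, Nat.sub_self, Nat.choose_self] at h
  have hflip : ∀ j ∈ range n, (1 : R) ^ j * (-1) ^ (n - j) * n.choose j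
      = -((-1 : R) ^ (n - 1 - j) * n.choose j) := by
    intro j hj
    rw [Nat.sub_right_comm, ← Nat.succ_pred_eq_of_pos (Nat.sub_pos_of_lt (mem_range.1 hj))]
    simp [pow_succ]
  rw [sum_congr rfl hflip, sum_neg_distrib] at h
  simp only [one_pow, pow_zero, mul_one, Nat.cast_one] at h
  linear_combination h

theorem sum_filter_ne_univ_apply_card {α M : Type*} [Fintype α] [DecidableEq α] [AddCommGroup M]
    (f : ℕ → M) :
    ∑ s ∈ univ.filter (fun s : Finset α => s ≠ univ), f #s
      = ∑ j ∈ range (Fintype.card α), (Fintype.card α).choose j • f j := by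
  rw [filter_ne', sum_erase_eq_sub (mem_univ _), ← powerset_univ, sum_powerset_apply_card,
    card_univ, sum_range_succ, Nat.choose_self, one_smul, add_sub_cancel_right]

theorem sum_Jind_eq_card (n : ℕ) (S : Finset (Fin n)) :
    ∑ x : Fin n → Fin (n - 1), Jind n S x =
      Nat.card {x : Fin n → Fin (n - 1) // Set.InjOn x S} := by
  classical
  simp only [Jind, sum_boole, Nat.card_eq_fintype_card, Fintype.card_subtype]

theorem cCoef_mul_sum_Jind {n : ℕ} {S : Finset (Fin n)} (hS : S ≠ univ) :
    cCoef n S * ∑ x : Fin n → Fin (n - 1), Jind n S x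
      = (-1) ^ (n - 1 - #S) * ((n - 1).factorial * ((n : ℝ) - 1)) := by
  have hlt : #S < n := by simpa using (card_lt_iff_ne_univ S).2 hS
  have hn : (n : ℝ) - 1 = (n - 1 : ℕ) := by
    rw [Nat.cast_sub (by omega), Nat.cast_one]
  have hfac := Nat.factorial_mul_descFactorial (Nat.le_sub_one_of_lt hlt)
  rw [sum_Jind_eq_card, Nat.card_subtype_injOn, Fintype.card_fin, Fintype.card_fin, cCoef, hn,
    show n - #S = n - 1 - #S + 1 by omega]
  rcases eq_or_ne (n - 1) 0 with h0 | h0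
  · simp [h0]
  · field_simp
    rw [← hfac]
    push_cast
    ring

/-- E[D] = (n-2)!/(n-1)^{n-2} over a uniform assignment of
n pigeons to n-1 holes. -/
theorem stmt5 (n : ℕ) (hn : 2 ≤ n) :
    (∑ x : Fin n → Fin (n - 1), Dfun n x) / ((n : ℝ) - 1) ^ n =
      (Nat.factorial (n - 2) : ℝ) / ((n : ℝ) - 1) ^ (n - 2) := by
  have hsum : ∑ x : Fin n → Fin (n - 1), Dfun n x = (n - 1).factorial * ((n : ℝ) - 1) := by
    calc ∑ x : Fin n → Fin (n - 1), Dfun n x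
        = ∑ S ∈ univ.filter (fun S : Finset (Fin n) => S ≠ univ),
            cCoef n S * ∑ x : Fin n → Fin (n - 1), Jind n S x := by
          simp only [Dfun, mul_sum]
          exact sum_comm
      _ = ∑ S ∈ univ.filter (fun S : Finset (Fin n) => S ≠ univ),
            (-1) ^ (n - 1 - #S) * ((n - 1).factorial * ((n : ℝ) - 1)) :=
          sum_congr rfl fun S hS => cCoef_mul_sum_Jind (mem_filter.1 hS).2
      _ = (∑ j ∈ range n, (-1 : ℝ) ^ (n - 1 - j) * n.choose j) *
            ((n - 1).factorial * ((n : ℝ) - 1)) := by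
          rw [sum_filter_ne_univ_apply_card (fun j => (-1 : ℝ) ^ (n - 1 - j) * _),
            Fintype.card_fin, sum_mul]
          exact sum_congr rfl fun j _ => by rw [nsmul_eq_mul]; ring
      _ = (n - 1).factorial * ((n : ℝ) - 1) := by
          rw [sum_range_neg_one_pow_sub_mul_choose (by omega), one_mul]
  obtain ⟨k, rfl⟩ := Nat.exists_eq_add_of_le' hn
  have hk : ((k + 2 : ℕ) : ℝ) - 1 = k + 1 := by push_cast; ring
  rw [hsum, hk, show k + 2 - 1 = k + 1 by omega, Nat.add_sub_cancel, Nat.factorial_succ, pow_add]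
  field_simp
  push_cast
  ring
end

section
/- For n ≥ 2, the second moment E[D²] of D = ∑_{S ⊊ [n]} c_S J_S over a uniform assignment of n pigeons to n-1 holes equals ((n-2)!/(n-1)^{n-2}) · n! · ∑_{c=0}^{n-1} ((-1)^{n-1-c}/(n-c)) · 1/((n-1)^{n-1-c} · c!). -/
/-!
Expanding the square, `∑ₓ D(x)² = ∑_{S,T ⊊ [n]} c_S c_T · #{x | x injective on S and on T}`.
Filling in `S` first, then `T \ S` avoiding the images of `S ∩ T`, then the rest freely, the count
is `(n-1)_{|S|} (n-1-|S ∩ T|)_{|T \ S|} (n-1)^{n-|S ∪ T|}`, and multiplied by `c_S c_T` it becomes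
`(-1)^{|S|+|T|} w(|S ∩ T|)`. For a proper `T`, toggling a point outside `T` pairs off the terms of
`∑_S (-1)^{|S|} w(|S ∩ T|)`, so this sum vanishes and the double sum over proper subsets collapses
to `∑_{c<n} (-1)^{n-1-c} C(n,c) w(c)`, which matches the claimed sum term by term.
-/

open Finset Function Fintype
open scoped Nat

section InjOnCount

variable {α β : Type*}

def injectiveAvoidingEquivEmbedding (ι : Type*) (P : Finset β) :
    {y : ι → β // Injective y ∧ ∀ i, y i ∉ P} ≃ (ι ↪ {b // b ∉ P}) where
  toFun y := ⟨fun i => ⟨y.1 i, y.2.2 i⟩, fun _ _ h => y.2.1 (congrArg Subtype.val h)⟩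
  invFun f := ⟨fun i => f i, fun _ _ h => f.injective (Subtype.ext h), fun i => (f i).2⟩

variable [DecidableEq α] [DecidableEq β]

theorem injOn_piEquivPiSubtypeProd_symm_iff (S T : Finset α) (y : S → β)
    (z : {i // i ∉ S} → β) :
    Set.InjOn ((Equiv.piEquivPiSubtypeProd (· ∈ S) (fun _ => β)).symm (y, z)) S ∧
        Set.InjOn ((Equiv.piEquivPiSubtypeProd (· ∈ S) (fun _ => β)).symm (y, z)) T ↔
      Injective y ∧ Set.InjOn z (T.subtype (· ∉ S)) ∧
        ∀ i ∈ T.subtype (· ∉ S), z i ∉ ({i : S | (i : α) ∈ T} : Finset S).image y := by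
  set x := (Equiv.piEquivPiSubtypeProd (· ∈ S) (fun _ => β)).symm (y, z)
  have hxy : ∀ i : S, x i = y i := fun i => by simp [x, i.2]
  have hxz : ∀ i : {i // i ∉ S}, x i = z i := fun i => by simp [x, i.2]
  have hS : Set.InjOn x S ↔ Injective y := by
    rw [Set.injOn_iff_injective]
    exact Iff.of_eq (congrArg Injective (funext hxy))
  rw [hS]
  refine and_congr_right fun hy => ⟨fun hT => ⟨?_, ?_⟩, fun ⟨hz, hR⟩ => ?_⟩
  · intro i hi j hj hij
    exact Subtype.ext (hT (mem_subtype.mp hi) (mem_subtype.mp hj) (by rw [hxz, hxz, hij]))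
  · intro i hi hmem
    obtain ⟨k, hk, hki⟩ := mem_image.mp hmem
    have hik : (k : α) = i :=
      hT (mem_filter.mp hk).2 (mem_subtype.mp hi) (by rw [hxy, hxz, hki])
    exact i.2 (hik ▸ k.2)
  · have hmix : ∀ a ∈ T, ∀ b ∈ T, a ∈ S → b ∉ S → x a ≠ x b := by
      intro a ha b hb haS hbS hab
      refine hR ⟨b, hbS⟩ (mem_subtype.mpr hb) (mem_image.mpr ⟨⟨a, haS⟩, by simpa using ha, ?_⟩)
      rw [← hxy, ← hxz]
      exact hab
    intro a ha b hb hab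
    by_cases haS : a ∈ S <;> by_cases hbS : b ∈ S
    · exact congrArg Subtype.val (@hy ⟨a, haS⟩ ⟨b, hbS⟩ (by rw [← hxy, ← hxy]; exact hab))
    · exact absurd hab (hmix a ha b hb haS hbS)
    · exact absurd hab.symm (hmix b hb a ha hbS haS)
    · exact congrArg Subtype.val (@hz ⟨a, haS⟩ (mem_subtype.mpr ha) ⟨b, hbS⟩
        (mem_subtype.mpr hb) (by rw [← hxz, ← hxz]; exact hab))

variable [Fintype α] [Fintype β]

theorem card_injOn_avoiding (s : Finset α) (P : Finset β) :
    card {x : α → β // Set.InjOn x s ∧ ∀ i ∈ s, x i ∉ P} =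
      (card β - #P).descFactorial #s * card β ^ (card α - #s) := by
  let e := Equiv.piEquivPiSubtypeProd (· ∈ s) (fun _ => β)
  calc _ = card {w : (s → β) × ({i // i ∉ s} → β) // Injective w.1 ∧ ∀ i, w.1 i ∉ P} :=
        card_congr <| e.subtypeEquiv fun x =>
          Set.injOn_iff_injective.and ⟨fun h i => h i i.2, fun h i hi => h ⟨i, hi⟩⟩
    _ = card (s ↪ {b // b ∉ P}) * card ({i // i ∉ s} → β) := by
        rw [card_congr (Equiv.prodSubtypeFstEquivSubtypeProd
            (p := fun y : s → β => Injective y ∧ ∀ i, y i ∉ P)), card_prod,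
          card_congr (injectiveAvoidingEquivEmbedding s P)]
    _ = _ := by
        rw [card_embedding_eq, card_fun, card_subtype_compl, card_subtype_compl]
        simp only [card_coe]

theorem card_injOn_injOn (S T : Finset α) :
    card {x : α → β // Set.InjOn x S ∧ Set.InjOn x T} =
      (card β).descFactorial #S *
        ((card β - #(S ∩ T)).descFactorial #(T \ S) * card β ^ (card α - #(S ∪ T))) := by
  let e := Equiv.piEquivPiSubtypeProd (· ∈ S) (fun _ => β)
  let T' : Finset {i // i ∉ S} := T.subtype (· ∉ S)
  let R : (S → β) → Finset β := fun y => ({i : S | (i : α) ∈ T} : Finset S).image y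
  have hT' : #T' = #(T \ S) := by rw [card_subtype, ← sdiff_eq_filter]
  have hR : ∀ y, Injective y → #(R y) = #(S ∩ T) := fun y hy => by
    rw [card_image_of_injective _ hy, ← card_map (Embedding.subtype _)]
    congr 1
    ext
    simp [and_comm]
  have hfiber : ∀ y : S → β, card {z // Injective y ∧ Set.InjOn z T' ∧ ∀ i ∈ T', z i ∉ R y} =
      if Injective y then
        (card β - #(S ∩ T)).descFactorial #(T \ S) * card β ^ (card α - #(S ∪ T)) else 0 := by
    intro y
    split_ifs with hy
    · simp only [hy, true_and]
      rw [card_injOn_avoiding, hR y hy, hT', card_subtype_compl, card_coe, Nat.sub_sub,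
        add_comm, card_sdiff_add_card, union_comm]
    · simp [hy]
  calc _ = card {w : (S → β) × ({i // i ∉ S} → β) //
          Injective w.1 ∧ Set.InjOn w.2 T' ∧ ∀ i ∈ T', w.2 i ∉ R w.1} :=
        card_congr <| e.subtypeEquiv fun x => by
          rw [← injOn_piEquivPiSubtypeProd_symm_iff, Prod.mk.eta, Equiv.symm_apply_apply]
    _ = _ := by
      rw [card_congr (Equiv.subtypeProdEquivSigmaSubtype fun y z =>
          Injective y ∧ Set.InjOn z T' ∧ ∀ i ∈ T', z i ∉ R y), Fintype.card_sigma]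
      simp only [hfiber]
      rw [sum_ite, sum_const_zero, add_zero, sum_const, smul_eq_mul, ← Fintype.card_subtype,
        card_congr (Equiv.subtypeInjectiveEquivEmbedding S β), card_embedding_eq, card_coe]

end InjOnCount

section AlternatingSums

theorem neg_one_pow_sub_eq_mul {R : Type*} [Ring R] {n k : ℕ} (h : k ≤ n) :
    (-1 : R) ^ (n - k) = (-1) ^ n * (-1) ^ k := by
  rw [← pow_sub_mul_pow (-1 : R) h, mul_assoc, ← pow_add, Even.neg_one_pow ⟨k, rfl⟩, mul_one]

variable {ι R : Type*} [Fintype ι] [DecidableEq ι] [CommRing R]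

theorem sum_neg_one_pow_card_mul_card_inter_eq_zero {T : Finset ι} (hT : T ≠ univ)
    (g : ℕ → R) : ∑ S : Finset ι, (-1) ^ #S * g #(S ∩ T) = 0 := by
  obtain ⟨a, ha⟩ : ∃ a, a ∉ T := by simpa [eq_univ_iff_forall] using hT
  have hpair : ∀ S ∈ (univ.erase a).powerset,
      (-1) ^ #(insert a S) * g #(insert a S ∩ T) = -((-1) ^ #S * g #(S ∩ T)) := fun S hS => by
    have haS : a ∉ S := fun h => notMem_erase a univ (mem_powerset.mp hS h)
    rw [card_insert_of_notMem haS, insert_inter_of_notMem ha, pow_succ]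
    ring
  rw [← powerset_univ, ← insert_erase (mem_univ a), sum_powerset_insert (notMem_erase a univ),
    sum_congr rfl hpair, sum_neg_distrib, add_neg_cancel]

theorem sum_sum_ne_univ_neg_one_pow_mul_card_inter (g : ℕ → R) :
    ∑ S ∈ univ.erase (univ : Finset ι), ∑ T ∈ univ.erase (univ : Finset ι),
        (-1) ^ #S * (-1) ^ #T * g #(S ∩ T) =
      ∑ c ∈ range (card ι), (-1) ^ (card ι - 1 - c) * (card ι).choose c * g c := by
  have hinner : ∀ S ∈ univ.erase (univ : Finset ι), ∑ T ∈ univ.erase (univ : Finset ι),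
      (-1) ^ #S * (-1) ^ #T * g #(S ∩ T) = -((-1) ^ card ι * ((-1) ^ #S * g #S)) := by
    intro S hS
    rw [sum_erase_eq_sub (mem_univ _)]
    simp_rw [mul_assoc, ← mul_sum, inter_comm S]
    rw [sum_neg_one_pow_card_mul_card_inter_eq_zero (ne_of_mem_erase hS), card_univ, univ_inter]
    ring
  have hbycard : ∑ S : Finset ι, (-1) ^ #S * g #S =
      ∑ k ∈ range (card ι + 1), (card ι).choose k • ((-1 : R) ^ k * g k) := by
    rw [← powerset_univ, sum_powerset_apply_card (fun k => (-1 : R) ^ k * g k), card_univ]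
  rw [sum_congr rfl hinner, sum_neg_distrib, ← mul_sum, sum_erase_eq_sub (mem_univ _), hbycard,
    sum_range_succ, card_univ, mul_sub, mul_add, Nat.choose_self, one_smul, add_sub_cancel_right,
    mul_sum, ← sum_neg_distrib]
  refine sum_congr rfl fun c hc => ?_
  rw [nsmul_eq_mul, Nat.sub_sub, add_comm, neg_one_pow_sub_eq_mul (mem_range.mp hc), pow_succ]
  ring

end AlternatingSums

/-- The value of `c_S c_T · #{x | J_S x = J_T x = 1}` up to the sign `(-1)^(|S|+|T|)`; it depends
on `S` and `T` only through `|S ∩ T|`. -/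
noncomputable def pairWeight (n c : ℕ) : ℝ :=
  (n - 1)! * ((n : ℝ) - 1) ^ n / ((n : ℝ) - 1) ^ (2 * (n - 1)) * ((n - 1 - c)! * ((n : ℝ) - 1) ^ c)

theorem sum_Dfun_sq (n : ℕ) :
    ∑ x : Fin n → Fin (n - 1), Dfun n x ^ 2 =
      ∑ S ∈ univ.erase univ, ∑ T ∈ univ.erase univ, cCoef n S * cCoef n T *
        (card {x : Fin n → Fin (n - 1) // Set.InjOn x S ∧ Set.InjOn x T} : ℝ) := by
  simp only [Dfun, filter_ne', sq, Finset.sum_mul_sum]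
  rw [sum_comm]
  refine sum_congr rfl fun S _ => ?_
  rw [sum_comm]
  refine sum_congr rfl fun T _ => ?_
  rw [Fintype.card_subtype, ← sum_boole, mul_sum]
  refine sum_congr rfl fun x _ => ?_
  unfold Jind
  split_ifs <;> simp_all

theorem coef_mul_coef_mul_descFactorial {m n s t c r : ℕ} {x : ℝ} (hx : x ≠ 0) (hs : s ≤ m)
    (ht : t ≤ m) (hct : c ≤ t) (hr : r + s + t = n + c) :
    (-1) ^ (m - s) * ((m - s)! : ℝ) / x ^ (m - s) *
        ((-1) ^ (m - t) * ((m - t)! : ℝ) / x ^ (m - t)) *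
        ((m.descFactorial s : ℝ) * (((m - c).descFactorial (t - c) : ℝ) * x ^ r)) =
      (-1) ^ s * (-1) ^ t * ((m ! : ℝ) * x ^ n / x ^ (2 * m) * ((m - c)! * x ^ c)) := by
  have hfs : ((m - s)! : ℝ) * m.descFactorial s = m ! := by
    exact_mod_cast Nat.factorial_mul_descFactorial hs
  have hft : ((m - t)! : ℝ) * (m - c).descFactorial (t - c) = (m - c)! := by
    rw [show m - t = m - c - (t - c) by omega]
    exact_mod_cast Nat.factorial_mul_descFactorial (by omega)
  have hxm : x ^ (2 * m) = x ^ (m - s) * x ^ s * (x ^ (m - t) * x ^ t) := by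
    rw [pow_sub_mul_pow x hs, pow_sub_mul_pow x ht, two_mul, pow_add]
  have hxn : x ^ n * x ^ c = x ^ r * x ^ s * x ^ t := by simp only [← pow_add, hr]
  have hsign : ((-1 : ℝ) ^ m) ^ 2 = 1 := by rw [← pow_mul]; exact Even.neg_one_pow ⟨m, by ring⟩
  rw [neg_one_pow_sub_eq_mul hs, neg_one_pow_sub_eq_mul ht, ← hfs, ← hft, hxm]
  field_simp
  linear_combination (m.descFactorial s * (m - c).descFactorial (t - c) : ℝ) *
    (x ^ r * x ^ s * x ^ t * hsign - hxn)

theorem cCoef_mul_cCoef_mul_card {n : ℕ} (hn : 2 ≤ n) {S T : Finset (Fin n)} (hS : S ≠ univ)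
    (hT : T ≠ univ) :
    cCoef n S * cCoef n T *
        (card {x : Fin n → Fin (n - 1) // Set.InjOn x S ∧ Set.InjOn x T} : ℝ) =
      (-1) ^ #S * (-1) ^ #T * pairWeight n #(S ∩ T) := by
  have hs : #S ≤ n - 1 := by have := (card_lt_iff_ne_univ S).mpr hS; simp at this; omega
  have ht : #T ≤ n - 1 := by have := (card_lt_iff_ne_univ T).mpr hT; simp at this; omega
  have hsd : #(T \ S) = #T - #(S ∩ T) := by
    have := card_sdiff_add_card_inter T S
    rw [inter_comm] at this
    omega
  have hr : n - #(S ∪ T) + #S + #T = n + #(S ∩ T) := by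
    have := card_union_add_card_inter S T
    have := card_le_univ (S ∪ T)
    simp only [Fintype.card_fin] at this
    omega
  have hx : ((n : ℝ) - 1) ≠ 0 := by
    have : (2 : ℝ) ≤ n := by exact_mod_cast hn
    linarith
  rw [card_injOn_injOn, Fintype.card_fin, Fintype.card_fin, hsd]
  push_cast [Nat.cast_pred (by omega : 0 < n)]
  exact coef_mul_coef_mul_descFactorial hx hs ht (card_le_card inter_subset_right) hr

theorem neg_one_pow_mul_choose_mul_pairWeight {n c : ℕ} (hn : 2 ≤ n) (hc : c < n) :
    (-1) ^ (n - 1 - c) * (n.choose c : ℝ) * pairWeight n c / ((n : ℝ) - 1) ^ n =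
      ((n - 2)! : ℝ) / ((n : ℝ) - 1) ^ (n - 2) * (n ! : ℝ) *
        ((-1 : ℝ) ^ (n - 1 - c) / ((n : ℝ) - c) *
          (1 / (((n : ℝ) - 1) ^ (n - 1 - c) * (c ! : ℝ)))) := by
  obtain ⟨k, rfl⟩ := Nat.exists_eq_add_of_le' hn
  obtain ⟨j, hj⟩ := Nat.exists_eq_add_of_le (Nat.le_of_lt_succ hc)
  have hchoose := Nat.choose_mul_factorial_mul_factorial hc.le
  rw [show k + 2 - c = j + 1 by omega, Nat.factorial_succ] at hchoose
  have hx : ((k + 2 : ℕ) : ℝ) - 1 = k + 1 := by push_cast; ring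
  have hj' : (k : ℝ) + 1 = c + j := by exact_mod_cast hj
  have hjc : ((k + 2 : ℕ) : ℝ) - c = j + 1 := by push_cast; linarith
  have hpow : ((k : ℝ) + 1) ^ (2 * (k + 1)) =
      (k + 1) ^ c * (k + 1) ^ j * ((k + 1) ^ k * (k + 1)) := by
    rw [← pow_add, ← hj, two_mul, pow_add, pow_succ]
  rw [pairWeight, show k + 2 - 1 - c = j by omega, show k + 2 - 1 = k + 1 by omega,
    Nat.add_sub_cancel, Nat.factorial_succ, hx, hjc]
  field_simp
  rw [hpow, ← hchoose]
  push_cast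
  ring

/-- E[D²] = ((n-2)!/(n-1)^{n-2}) · n! ·
∑_{c=0}^{n-1} ((-1)^{n-1-c}/(n-c)) · 1/((n-1)^{n-1-c} c!). -/
theorem stmt8 (n : ℕ) (hn : 2 ≤ n) :
    (∑ x : Fin n → Fin (n - 1), (Dfun n x) ^ 2) / ((n : ℝ) - 1) ^ n =
      ((Nat.factorial (n - 2) : ℝ) / ((n : ℝ) - 1) ^ (n - 2)) *
        (Nat.factorial n : ℝ) *
        ∑ c ∈ Finset.range n,
          ((-1 : ℝ) ^ (n - 1 - c) / ((n : ℝ) - c)) *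
            (1 / (((n : ℝ) - 1) ^ (n - 1 - c) * (Nat.factorial c : ℝ))) := by
  have hpairs : ∑ x : Fin n → Fin (n - 1), Dfun n x ^ 2 =
      ∑ c ∈ range n, (-1) ^ (n - 1 - c) * (n.choose c : ℝ) * pairWeight n c := by
    have hsum := sum_sum_ne_univ_neg_one_pow_mul_card_inter (ι := Fin n) (pairWeight n)
    rw [Fintype.card_fin] at hsum
    rw [sum_Dfun_sq, ← hsum]
    exact sum_congr rfl fun S hS => sum_congr rfl fun T hT =>
      cCoef_mul_cCoef_mul_card hn (ne_of_mem_erase hS) (ne_of_mem_erase hT)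
  rw [hpairs, sum_div, mul_sum]
  exact sum_congr rfl fun c hc => neg_one_pow_mul_choose_mul_pairWeight hn (mem_range.mp hc)
end

section
/- For any fixed integer n ≥ 1 and c with 0 ≤ c ≤ n-1, the signed count ∑_{(S,T): S,T ⊊ [n], |S∩T| = c} (-1)^{|S|-|T|} equals (-1)^{n-1-c} · binomial(n, c). -/
/-!
Fix a proper subset `S`. Toggling a fixed element `a ∉ S` in `T` preserves `S ∩ T` and flips the
parity of `|T|`, so the signed sum over all `T` with `|S ∩ T| = c` vanishes. The sum over proper
`T` is therefore minus the term `T = [n]`, which is `(-1)^(c+n)` for each of the `binomial(n, c)`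
sets `S` of size `c` (all proper, as `c < n`).
-/

open Finset
open scoped symmDiff

namespace Finset

variable {α : Type*} [DecidableEq α]

theorem neg_one_pow_card_symmDiff_singleton {R : Type*} [Monoid R] [HasDistribNeg R]
    (T : Finset α) (a : α) : (-1 : R) ^ #(T ∆ {a}) = -(-1) ^ #T := by
  by_cases ha : a ∈ T
  · have : T ∆ {a} = T.erase a := by ext; simp [mem_symmDiff]; grind
    rw [this, ← card_erase_add_one ha, pow_succ', neg_one_mul, neg_neg]
  · have : T ∆ {a} = insert a T := by ext; simp [mem_symmDiff]; grind
    rw [this, card_insert_of_notMem ha, pow_succ']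
    simp

variable [Fintype α]

theorem sum_neg_one_pow_card_mul_inter_eq_zero {R : Type*} [Ring R]
    {S : Finset α} (hS : S ≠ univ) (g : Finset α → R) :
    ∑ T, (-1) ^ #T * g (S ∩ T) = 0 := by
  obtain ⟨a, haS⟩ : ∃ a, a ∉ S := by simpa [eq_univ_iff_forall] using hS
  have hinter (T : Finset α) : S ∩ (T ∆ {a}) = S ∩ T := by
    ext x; simp [mem_symmDiff]; grind
  refine sum_ninvolution (fun T => T ∆ {a}) (fun T => ?_) (fun T _ => ?_) (fun _ => mem_univ _)
    (fun T => symmDiff_symmDiff_cancel_right _ _)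
  · rw [hinter, neg_one_pow_card_symmDiff_singleton, neg_mul, add_neg_cancel]
  · intro h
    simpa [mem_symmDiff] using congrArg (a ∈ ·) h

theorem sum_erase_univ_neg_one_pow_card_add_card {S : Finset α} (hS : S ≠ univ) (c : ℕ) :
    ∑ T ∈ univ.erase univ, (if #(S ∩ T) = c then (-1 : ℤ) ^ (#S + #T) else 0) =
      -(if #S = c then (-1) ^ (c + Fintype.card α) else 0) := by
  have hzero : ∑ T, (if #(S ∩ T) = c then (-1 : ℤ) ^ (#S + #T) else 0) = 0 := by
    refine .trans (sum_congr rfl fun T _ => ?_)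
      (sum_neg_one_pow_card_mul_inter_eq_zero hS fun U => if #U = c then (-1) ^ #S else 0)
    split_ifs <;> ring
  rw [sum_erase_eq_sub (mem_univ _), hzero, inter_univ, card_univ, zero_sub]
  split_ifs with h <;> simp [h]

theorem sum_neg_one_pow_card_proper_pairs {c : ℕ} (hc : c < Fintype.card α) :
    ∑ p ∈ univ.filter (fun p : Finset α × Finset α => p.1 ≠ univ ∧ p.2 ≠ univ ∧ #(p.1 ∩ p.2) = c),
      (-1 : ℤ) ^ (#p.1 + #p.2) = -((-1) ^ (c + Fintype.card α) * (Fintype.card α).choose c) := by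
  have hpairs : univ.filter (fun p : Finset α × Finset α => p.1 ≠ univ ∧ p.2 ≠ univ ∧
      #(p.1 ∩ p.2) = c) =
      (univ.erase univ ×ˢ univ.erase univ).filter (fun p => #(p.1 ∩ p.2) = c) := by
    ext; simp [and_assoc]
  have hproper : (univ.erase univ).filter (fun S : Finset α => #S = c) = powersetCard c univ := by
    ext S
    simp only [mem_filter, mem_erase, mem_univ, mem_powersetCard, subset_univ, true_and, and_true]
    refine ⟨And.right, fun hS => ⟨?_, hS⟩⟩
    rintro rfl
    exact hc.ne (hS.symm.trans card_univ)
  rw [hpairs, sum_filter, sum_product,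
    sum_congr rfl fun S hS => sum_erase_univ_neg_one_pow_card_add_card (ne_of_mem_erase hS) c,
    sum_neg_distrib, ← sum_filter, hproper, sum_const, card_powersetCard, card_univ, nsmul_eq_mul,
    mul_comm]

end Finset

/-- ∑_{(S,T): S,T ⊊ [n], |S∩T| = c} (-1)^{|S|-|T|} = (-1)^{n-1-c}·C(n,c).
(Note (-1)^{|S|-|T|} = (-1)^{|S|+|T|}.) -/
theorem stmt10 (n : ℕ) (hn : 1 ≤ n) (c : ℕ) (hc : c ≤ n - 1) :
    ∑ p ∈ (Finset.univ : Finset (Finset (Fin n) × Finset (Fin n))).filter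
        (fun p => p.1 ≠ Finset.univ ∧ p.2 ≠ Finset.univ ∧ (p.1 ∩ p.2).card = c),
      (-1 : ℤ) ^ (p.1.card + p.2.card) =
      (-1 : ℤ) ^ (n - 1 - c) * (n.choose c : ℤ) := by
  have hcn : c < Fintype.card (Fin n) := by rw [Fintype.card_fin]; omega
  have hexp : c + n = (n - 1 - c) + 1 + 2 * c := by omega
  rw [sum_neg_one_pow_card_proper_pairs hcn, Fintype.card_fin, hexp, pow_add, pow_add, pow_mul,
    neg_one_sq, one_pow, mul_one, pow_one]
  ring
end

section
/- For n ≥ 2, the alternating sum ∑_{c=0}^{n-1} ((-1)^{n-1-c}/(n-c)) · 1/((n-1)^{n-1-c} · c!) is at most 1/(n-1)!. -/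
/-!
Substituting `k = n - 1 - c` turns the sum into the alternating sum `∑ (-1)^k a_k` with
`a_k = 1 / ((k + 1) (n - 1)^k (n - 1 - k)!)`. Passing from `k` to `k + 1` multiplies the
denominator by `(k + 2)(n - 1) / ((k + 1)(n - 1 - k)) ≥ 1`, so `a` is decreasing and positive,
and such an alternating sum is at most its first term `a_0 = 1 / (n - 1)!`.
-/

open Finset Nat

theorem Antitone.sum_range_alternating_mem_Icc {R : Type*} [Ring R] [LinearOrder R]
    [IsOrderedRing R] {f : ℕ → R} (hf : Antitone f) (hf₀ : ∀ k, 0 ≤ f k) (m : ℕ) :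
    ∑ k ∈ range m, (-1) ^ k * f k ∈ Set.Icc 0 (f 0) := by
  induction m generalizing f with
  | zero => simpa using hf₀ 0
  | succ m ih =>
    obtain ⟨hlo, hhi⟩ :=
      ih (f := fun k => f (k + 1)) (fun _ _ h => hf (by omega)) (fun _ => hf₀ _)
    have hsplit : ∑ k ∈ range (m + 1), (-1) ^ k * f k
        = f 0 - ∑ k ∈ range m, (-1) ^ k * f (k + 1) := by
      simp only [sum_range_succ', pow_succ, pow_zero, one_mul, mul_neg_one, neg_mul,
        sum_neg_distrib]
      abel
    rw [hsplit]
    exact ⟨sub_nonneg.mpr (hhi.trans (hf (Nat.zero_le _))), sub_le_self _ hlo⟩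

theorem Nat.factorial_le_mul_factorial_pred {N m : ℕ} (hN : 1 ≤ N) (hm : m ≤ N) :
    m ! ≤ N * (m - 1)! := by
  rcases m with _ | m
  · simpa using hN
  · rw [Nat.factorial_succ]
    exact Nat.mul_le_mul_right _ hm

def reflectedDenom (N k : ℕ) : ℕ := (k + 1) * N ^ k * (N - k)!

theorem reflectedDenom_pos {N : ℕ} (hN : 1 ≤ N) (k : ℕ) : 0 < reflectedDenom N k := by
  unfold reflectedDenom; positivity

theorem monotone_reflectedDenom {N : ℕ} (hN : 1 ≤ N) : Monotone (reflectedDenom N) := by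
  refine monotone_nat_of_le_succ fun k => ?_
  have hfac : (N - k)! ≤ N * (N - (k + 1))! := by
    simpa [Nat.sub_sub] using Nat.factorial_le_mul_factorial_pred hN (Nat.sub_le N k)
  calc reflectedDenom N k = (k + 1) * N ^ k * (N - k)! := rfl
    _ ≤ (k + 1 + 1) * N ^ k * (N * (N - (k + 1))!) := by gcongr; omega
    _ = reflectedDenom N (k + 1) := by unfold reflectedDenom; ring

theorem sum_range_eq_sum_alternating_inv_reflectedDenom (N : ℕ) :
    ∑ c ∈ range (N + 1),
        ((-1 : ℝ) ^ (N + 1 - 1 - c) / (((N + 1 : ℕ) : ℝ) - c)) *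
          (1 / ((((N + 1 : ℕ) : ℝ) - 1) ^ (N + 1 - 1 - c) * (c ! : ℝ))) =
      ∑ k ∈ range (N + 1), (-1 : ℝ) ^ k * (1 / (reflectedDenom N k : ℝ)) := by
  rw [← sum_range_reflect]
  refine sum_congr rfl fun c hc => ?_
  have hcN : c ≤ N := Nat.lt_succ_iff.mp (mem_range.mp hc)
  simp only [Nat.add_sub_cancel, reflectedDenom, Nat.sub_sub_self hcN]
  push_cast [Nat.cast_sub hcN]
  rw [show (N : ℝ) + 1 - (N - c) = c + 1 by ring, add_sub_cancel_right]
  field_simp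

/-- For n ≥ 2, ∑_{c=0}^{n-1} ((-1)^{n-1-c}/(n-c)) · 1/((n-1)^{n-1-c} c!)
is at most 1/(n-1)!. -/
theorem stmt11 (n : ℕ) (hn : 2 ≤ n) :
    ∑ c ∈ Finset.range n,
        ((-1 : ℝ) ^ (n - 1 - c) / ((n : ℝ) - c)) *
          (1 / (((n : ℝ) - 1) ^ (n - 1 - c) * (Nat.factorial c : ℝ))) ≤
      1 / (Nat.factorial (n - 1) : ℝ) := by
  obtain ⟨N, rfl⟩ : ∃ N, n = N + 1 := ⟨n - 1, by omega⟩
  have hN : 1 ≤ N := by omega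
  have hanti : Antitone fun k => 1 / (reflectedDenom N k : ℝ) := fun a b hab =>
    one_div_le_one_div_of_le (by exact_mod_cast reflectedDenom_pos hN a)
      (by exact_mod_cast monotone_reflectedDenom hN hab)
  rw [sum_range_eq_sum_alternating_inv_reflectedDenom]
  simpa [reflectedDenom] using
    (hanti.sum_range_alternating_mem_Icc (fun k => by positivity) (N + 1)).2
end

section
/- For n ≥ 3, there exists a family of weakenings (each a monomial multiple of a non-minimality axiom or transitivity axiom of the ordering principle on n elements) with 0/1 coefficients such that the sum of the chosen weakenings equals the constant function 1 on all assignments x ∈ {0,1}^{binom(n,2)}, and the number of chosen weakenings is exactly 2^n − n. -/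
/-- Value of a weakening, encoded as the set E of literals x_{i,j} (ordered pairs)
appearing in it, on an assignment x (with x j i = !x i j for i ≠ j):
W(x) = ∏_{(i,j)∈E} x_{i,j}. -/
noncomputable def wVal (n : ℕ) (E : Finset (Fin n × Fin n))
    (x : Fin n → Fin n → Bool) : ℝ :=
  ∏ p ∈ E, if x p.1 p.2 then 1 else 0

/-- The non-minimality axiom for element i: the monomial ∏_{j≠i} x_{i,j}. -/
def nonMinAxiom (n : ℕ) (i : Fin n) : Finset (Fin n × Fin n) :=
  (Finset.univ.filter (fun j => j ≠ i)).image (fun j => (i, j))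

/-- E is a weakening of an axiom of the ordering principle: a monomial
(set of literals x_{i,j}, i ≠ j) containing a non-minimality axiom or a
transitivity axiom x_{i,j}x_{j,k}x_{k,i}. -/
def IsWeakening (n : ℕ) (E : Finset (Fin n × Fin n)) : Prop :=
  (∀ p ∈ E, p.1 ≠ p.2) ∧
    ((∃ i : Fin n, nonMinAxiom n i ⊆ E) ∨
      (∃ i j k : Fin n, i ≠ j ∧ j ≠ k ∧ i ≠ k ∧
        ({(i, j), (j, k), (k, i)} : Finset (Fin n × Fin n)) ⊆ E))

/-! Branch on the literal `x_{p,v}` for two elements `p ≠ v` of the ground set `V`. If `x_{p,v}`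
holds, take the family for `V \ {v}` and split the non-minimality axiom (relative to `V \ {v}`)
of each `i ≠ p` on `x_{i,v}`: the half with `x_{i,v}` is the axiom of `i` relative to `V`, the
half with `x_{v,i}` contains the triangle `p → v → i → p`. The case `x_{v,p}` is symmetric, and
the two halves of the axiom of each `i ∉ {p, v}` on `V` recombine. So `|V|` axioms plus
`c(V) = c(V \ {v}) + c(V \ {p}) + 2 (|V| - 2)` triangle blocks, `2^|V| - |V|` monomials in
all, sum to `1`. They are consistent monomials, hence pairwise distinct. -/

open Finset

namespace OrderingPrinciple

variable {n : ℕ}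

def IsTournament (x : Fin n → Fin n → Bool) : Prop :=
  ∀ i j, i ≠ j → x j i = !x i j

def litVal (x : Fin n → Fin n → Bool) (q : Fin n × Fin n) : ℝ :=
  if x q.1 q.2 then 1 else 0

lemma wVal_eq_prod_litVal (E : Finset (Fin n × Fin n)) (x : Fin n → Fin n → Bool) :
    wVal n E x = ∏ q ∈ E, litVal x q := rfl

lemma litVal_nonneg (x : Fin n → Fin n → Bool) (q : Fin n × Fin n) : 0 ≤ litVal x q := by
  unfold litVal; split_ifs <;> norm_num

lemma litVal_mul_self (x : Fin n → Fin n → Bool) (q : Fin n × Fin n) :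
    litVal x q * litVal x q = litVal x q := by
  unfold litVal; split_ifs <;> norm_num

lemma IsTournament.litVal_add_litVal_swap {x : Fin n → Fin n → Bool} (hx : IsTournament x)
    {i j : Fin n} (hij : i ≠ j) : litVal x (i, j) + litVal x (j, i) = 1 := by
  simp only [litVal, hx i j hij]
  cases x i j <;> norm_num

lemma IsTournament.litVal_mul_litVal_swap {x : Fin n → Fin n → Bool} (hx : IsTournament x)
    {i j : Fin n} (hij : i ≠ j) : litVal x (i, j) * litVal x (j, i) = 0 := by
  simp only [litVal, hx i j hij]
  cases x i j <;> norm_num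

lemma wVal_nonneg (E : Finset (Fin n × Fin n)) (x : Fin n → Fin n → Bool) : 0 ≤ wVal n E x :=
  prod_nonneg fun q _ => litVal_nonneg x q

/-- No freshness condition: literals are idempotent. -/
lemma wVal_insert (q : Fin n × Fin n) (E : Finset (Fin n × Fin n)) (x : Fin n → Fin n → Bool) :
    wVal n (insert q E) x = litVal x q * wVal n E x := by
  by_cases hq : q ∈ E
  · rw [insert_eq_of_mem hq, wVal_eq_prod_litVal, ← mul_prod_erase _ _ hq, ← mul_assoc,
      litVal_mul_self]
  · exact prod_insert hq

def IsConsistent (E : Finset (Fin n × Fin n)) : Prop :=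
  ∀ i j, (i, j) ∈ E → (j, i) ∉ E

lemma IsConsistent.fst_ne_snd {E : Finset (Fin n × Fin n)} (hE : IsConsistent E)
    {q : Fin n × Fin n} (hq : q ∈ E) : q.1 ≠ q.2 := by
  obtain ⟨a, b⟩ := q
  rintro (rfl : a = b)
  exact hE a a hq hq

lemma IsConsistent.insert {E : Finset (Fin n × Fin n)} (hE : IsConsistent E) {i j : Fin n}
    (hij : i ≠ j) (hji : (j, i) ∉ E) : IsConsistent (insert (i, j) E) := by
  intro a b hab hba
  simp only [mem_insert, Prod.mk.injEq] at hab hba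
  grind [IsConsistent]

/-- Orient each pair as `E` prescribes, and by the order of `Fin n` otherwise. -/
lemma IsConsistent.exists_wVal_eq_one {E : Finset (Fin n × Fin n)} (hE : IsConsistent E) :
    ∃ x, IsTournament x ∧ wVal n E x = 1 := by
  refine ⟨fun i j => decide ((i, j) ∈ E ∨ ((j, i) ∉ E ∧ i < j)), ?_, ?_⟩
  · intro i j hij
    by_cases h : (i, j) ∈ E
    · simp [h, hE i j h]
    by_cases h' : (j, i) ∈ E
    · simp [h, h']
    rcases hij.lt_or_gt with hlt | hlt <;> simp [h, h', hlt, hlt.asymm]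
  · exact prod_eq_one fun q hq => by simp [hq]

/-- A repeated member would make the sum at least `2` at a point where that member is `1`. -/
lemma nodup_of_sum_wVal_eq_one {s : Multiset (Finset (Fin n × Fin n))}
    (hs : ∀ E ∈ s, IsConsistent E)
    (hsum : ∀ x, IsTournament x → (s.map (wVal n · x)).sum = 1) : s.Nodup := by
  rw [Multiset.nodup_iff_ne_cons_cons]
  rintro E t rfl
  obtain ⟨x, hx, hE⟩ := (hs E (Multiset.mem_cons_self _ _)).exists_wVal_eq_one
  have ht : 0 ≤ (t.map (wVal n · x)).sum :=
    Multiset.sum_nonneg fun _ h => by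
      obtain ⟨F, -, rfl⟩ := Multiset.mem_map.mp h
      exact wVal_nonneg F x
  have := hsum x hx
  simp only [Multiset.map_cons, Multiset.sum_cons, hE] at this
  linarith

def nonMinAxiomOn (V : Finset (Fin n)) (i : Fin n) : Finset (Fin n × Fin n) :=
  (V.erase i).image (Prod.mk i)

@[simp]
lemma mem_nonMinAxiomOn {V : Finset (Fin n)} {i a b : Fin n} :
    (a, b) ∈ nonMinAxiomOn V i ↔ a = i ∧ b ≠ i ∧ b ∈ V := by
  simp only [nonMinAxiomOn, mem_image, mem_erase, Prod.mk.injEq]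
  constructor
  · rintro ⟨j, hj, rfl, rfl⟩
    exact ⟨rfl, hj⟩
  · rintro ⟨rfl, hb⟩
    exact ⟨b, hb, rfl, rfl⟩

lemma nonMinAxiom_eq_nonMinAxiomOn_univ (i : Fin n) :
    nonMinAxiom n i = nonMinAxiomOn univ i := by
  ext ⟨a, b⟩
  simp only [nonMinAxiom, mem_image, mem_filter, mem_univ, true_and, Prod.mk.injEq,
    mem_nonMinAxiomOn, and_true]
  constructor
  · rintro ⟨j, hj, rfl, rfl⟩
    exact ⟨rfl, hj⟩
  · rintro ⟨rfl, hb⟩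
    exact ⟨b, hb, rfl, rfl⟩

lemma isConsistent_nonMinAxiomOn (V : Finset (Fin n)) (i : Fin n) :
    IsConsistent (nonMinAxiomOn V i) := by
  intro a b hab hba
  simp only [mem_nonMinAxiomOn] at hab hba
  exact hab.2.1 hba.1

lemma nonMinAxiomOn_eq_insert {V : Finset (Fin n)} {i j : Fin n} (hj : j ∈ V) (hij : i ≠ j) :
    nonMinAxiomOn V i = insert (i, j) (nonMinAxiomOn (V.erase j) i) := by
  ext ⟨a, b⟩
  simp only [mem_insert, Prod.mk.injEq, mem_nonMinAxiomOn, mem_erase]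
  grind

lemma wVal_nonMinAxiomOn {V : Finset (Fin n)} {i j : Fin n} (hj : j ∈ V) (hij : i ≠ j)
    (x : Fin n → Fin n → Bool) :
    wVal n (nonMinAxiomOn V i) x = litVal x (i, j) * wVal n (nonMinAxiomOn (V.erase j) i) x := by
  rw [nonMinAxiomOn_eq_insert hj hij, wVal_insert]

/-- The branch `x_{p,v}` of the cycle blocks of `V`, where `prev` are those of `V \ {v}`: for
`i ∈ V \ {p, v}` the new block closes the triangle `p → v → i → p`. -/
def extendCycles (V : Finset (Fin n)) (p v : Fin n) (prev : Multiset (Finset (Fin n × Fin n))) :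
    Multiset (Finset (Fin n × Fin n)) :=
  prev.map (insert (p, v)) +
    ((V.erase v).erase p).val.map fun i =>
      insert (p, v) (insert (v, i) (nonMinAxiomOn (V.erase v) i))

def cycleBlocks (V : Finset (Fin n)) : Multiset (Finset (Fin n × Fin n)) :=
  if h : 1 < V.card then
    have hV : V.Nonempty := card_pos.mp (by omega)
    extendCycles V (V.min' hV) (V.max' hV) (cycleBlocks (V.erase (V.max' hV))) +
      extendCycles V (V.max' hV) (V.min' hV) (cycleBlocks (V.erase (V.min' hV)))
  else 0
termination_by V.card
decreasing_by
  · exact card_erase_lt_of_mem (V.max'_mem hV)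
  · exact card_erase_lt_of_mem (V.min'_mem hV)

def orderFamily (V : Finset (Fin n)) : Multiset (Finset (Fin n × Fin n)) :=
  V.val.map (nonMinAxiomOn V) + cycleBlocks V

lemma cycleBlocks_singleton (a : Fin n) : cycleBlocks {a} = 0 := by
  rw [cycleBlocks, dif_neg (by simp)]

@[elab_as_elim]
lemma cycleBlocks_induction {P : Finset (Fin n) → Prop} (V : Finset (Fin n))
    (hV : V.Nonempty) (singleton : ∀ a, P {a})
    (step : ∀ V p v, p ∈ V → v ∈ V → p ≠ v →
      cycleBlocks V = extendCycles V p v (cycleBlocks (V.erase v)) +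
        extendCycles V v p (cycleBlocks (V.erase p)) →
      P (V.erase v) → P (V.erase p) → P V) : P V := by
  obtain ⟨a, rfl⟩ | hV2 := hV.exists_eq_singleton_or_nontrivial
  · exact singleton a
  have h : 1 < V.card := one_lt_card_iff_nontrivial.mpr hV2
  have hne : V.Nonempty := hV2.nonempty
  refine step V _ _ (V.min'_mem hne) (V.max'_mem hne) (V.min'_lt_max'_of_card h).ne
    (by rw [cycleBlocks, dif_pos h]) ?_ ?_ <;>
    exact cycleBlocks_induction _ hV2.erase_nonempty singleton step
termination_by V.card
decreasing_by
  · exact card_erase_lt_of_mem (V.max'_mem hne)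
  · exact card_erase_lt_of_mem (V.min'_mem hne)

lemma card_extendCycles {V : Finset (Fin n)} {p v : Fin n} (hp : p ∈ V) (hv : v ∈ V)
    (hpv : p ≠ v) (prev : Multiset (Finset (Fin n × Fin n))) :
    Multiset.card (extendCycles V p v prev) = Multiset.card prev + (V.card - 2) := by
  rw [extendCycles, Multiset.card_add, Multiset.card_map, Multiset.card_map, card_val,
    card_erase_of_mem (mem_erase.mpr ⟨hpv, hp⟩), card_erase_of_mem hv]
  omega

lemma card_cycleBlocks {V : Finset (Fin n)} (hV : V.Nonempty) :
    Multiset.card (cycleBlocks V) + 2 * V.card = 2 ^ V.card := by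
  refine cycleBlocks_induction V hV (fun a => by simp [cycleBlocks_singleton]) ?_
  intro V p v hp hv hpv hCY ihv ihp
  rw [card_erase_of_mem hv] at ihv
  rw [card_erase_of_mem hp] at ihp
  have h2 : 2 ≤ V.card := one_lt_card.mpr ⟨p, hp, v, hv, hpv⟩
  have hpow : 2 ^ V.card = 2 ^ (V.card - 1) + 2 ^ (V.card - 1) := by
    rw [← two_mul, ← pow_succ', Nat.sub_add_cancel (by omega)]
  rw [hCY, Multiset.card_add, card_extendCycles hp hv hpv, card_extendCycles hv hp hpv.symm]
  omega

lemma card_orderFamily {V : Finset (Fin n)} (hV : V.Nonempty) :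
    Multiset.card (orderFamily V) + V.card = 2 ^ V.card := by
  rw [orderFamily, Multiset.card_add, Multiset.card_map, card_val, ← card_cycleBlocks hV]
  omega

lemma sum_map_orderFamily (V : Finset (Fin n)) (f : Finset (Fin n × Fin n) → ℝ) :
    ((orderFamily V).map f).sum =
      ∑ i ∈ V, f (nonMinAxiomOn V i) + ((cycleBlocks V).map f).sum := by
  rw [orderFamily, Multiset.map_add, Multiset.sum_add, Multiset.map_map, sum_map_val]
  rfl

/-- Under `x_{p,v}` the axiom of `v` vanishes, that of `p` is its axiom on `V \ {v}`, and for
every other `i` the halves split by `x_{i,v}` recombine. -/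
lemma sum_extendCycles {V : Finset (Fin n)} {p v : Fin n} (hp : p ∈ V) (hv : v ∈ V)
    (hpv : p ≠ v) (prev : Multiset (Finset (Fin n × Fin n))) {x : Fin n → Fin n → Bool}
    (hx : IsTournament x) :
    litVal x (p, v) * ∑ i ∈ V, wVal n (nonMinAxiomOn V i) x +
        ((extendCycles V p v prev).map (wVal n · x)).sum =
      litVal x (p, v) * (∑ i ∈ V.erase v, wVal n (nonMinAxiomOn (V.erase v) i) x +
        (prev.map (wVal n · x)).sum) := by
  set a := litVal x (p, v)
  set M := (V.erase v).erase p
  have hpV' : p ∈ V.erase v := mem_erase.mpr ⟨hpv, hp⟩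
  have hv_term : a * wVal n (nonMinAxiomOn V v) x = 0 := by
    rw [wVal_nonMinAxiomOn hp hpv.symm, ← mul_assoc, hx.litVal_mul_litVal_swap hpv, zero_mul]
  have hp_term :
      a * wVal n (nonMinAxiomOn V p) x = a * wVal n (nonMinAxiomOn (V.erase v) p) x := by
    rw [wVal_nonMinAxiomOn hv hpv, ← mul_assoc, litVal_mul_self]
  have hM_term : ∀ i ∈ M, a * wVal n (nonMinAxiomOn V i) x +
      wVal n (insert (p, v) (insert (v, i) (nonMinAxiomOn (V.erase v) i))) x =
      a * wVal n (nonMinAxiomOn (V.erase v) i) x := by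
    intro i hi
    have hiv : i ≠ v := (mem_erase.mp (mem_of_mem_erase hi)).1
    rw [wVal_insert, wVal_insert, wVal_nonMinAxiomOn hv hiv]
    linear_combination a * wVal n (nonMinAxiomOn (V.erase v) i) x * hx.litVal_add_litVal_swap hiv
  have hM : a * ∑ i ∈ M, wVal n (nonMinAxiomOn V i) x +
      ∑ i ∈ M, wVal n (insert (p, v) (insert (v, i) (nonMinAxiomOn (V.erase v) i))) x =
      a * ∑ i ∈ M, wVal n (nonMinAxiomOn (V.erase v) i) x := by
    rw [mul_sum, mul_sum, ← sum_add_distrib]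
    exact sum_congr rfl hM_term
  have hprev :
      (prev.map ((wVal n · x) ∘ insert (p, v))).sum = a * (prev.map (wVal n · x)).sum := by
    simp only [Function.comp_def, wVal_insert (p, v), Multiset.sum_map_mul_left, a]
  rw [← add_sum_erase V _ hv, ← add_sum_erase _ _ hpV', ← add_sum_erase _ _ hpV', extendCycles,
    Multiset.map_add, Multiset.sum_add, Multiset.map_map, Multiset.map_map, sum_map_val, hprev]
  simp only [Function.comp_apply]
  linear_combination hv_term + hp_term + hM

lemma sum_orderFamily {V : Finset (Fin n)} (hV : V.Nonempty) {x : Fin n → Fin n → Bool}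
    (hx : IsTournament x) : ((orderFamily V).map (wVal n · x)).sum = 1 := by
  refine cycleBlocks_induction V hV (fun a => by simp [orderFamily, cycleBlocks_singleton,
    nonMinAxiomOn, wVal]) ?_
  intro V p v hp hv hpv hCY ihv ihp
  rw [sum_map_orderFamily] at ihv ihp ⊢
  have hv' := sum_extendCycles hp hv hpv (cycleBlocks (V.erase v)) hx
  have hp' := sum_extendCycles hv hp hpv.symm (cycleBlocks (V.erase p)) hx
  rw [ihv, mul_one] at hv'
  rw [ihp, mul_one] at hp'
  rw [hCY, Multiset.map_add, Multiset.sum_add]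
  linear_combination hv' + hp' +
    (1 - ∑ i ∈ V, wVal n (nonMinAxiomOn V i) x) * hx.litVal_add_litVal_swap hpv

def IsCycleBlock (V : Finset (Fin n)) (C : Finset (Fin n × Fin n)) : Prop :=
  C ⊆ V ×ˢ V ∧ IsConsistent C ∧ ∃ i j k : Fin n, {(i, j), (j, k), (k, i)} ⊆ C

lemma isCycleBlock_of_mem_extendCycles {V : Finset (Fin n)} {p v : Fin n} (hp : p ∈ V)
    (hv : v ∈ V) (hpv : p ≠ v) {prev : Multiset (Finset (Fin n × Fin n))}
    (hprev : ∀ C ∈ prev, IsCycleBlock (V.erase v) C) :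
    ∀ C ∈ extendCycles V p v prev, IsCycleBlock V C := by
  intro C hC
  rcases Multiset.mem_add.mp hC with hC | hC
  · obtain ⟨C₀, hC₀, rfl⟩ := Multiset.mem_map.mp hC
    obtain ⟨hsub, hcons, i, j, k, htri⟩ := hprev C₀ hC₀
    have hsub' : C₀ ⊆ V ×ˢ V :=
      hsub.trans (product_subset_product (erase_subset _ _) (erase_subset _ _))
    refine ⟨insert_subset (mk_mem_product hp hv) hsub', hcons.insert hpv fun h => ?_,
      i, j, k, htri.trans (subset_insert _ _)⟩
    simpa using (mem_product.mp (hsub h)).1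
  · obtain ⟨i, hi, rfl⟩ := Multiset.mem_map.mp hC
    simp only [mem_val, mem_erase] at hi
    obtain ⟨hip, hiv, hiV⟩ := hi
    refine ⟨?_, ?_, p, v, i, ?_⟩
    · rintro ⟨a, b⟩ hab
      simp only [mem_insert, Prod.mk.injEq, mem_nonMinAxiomOn, mem_erase] at hab
      rcases hab with ⟨rfl, rfl⟩ | ⟨rfl, rfl⟩ | ⟨rfl, -, -, hb⟩
      exacts [mk_mem_product hp hv, mk_mem_product hv hiV, mk_mem_product hiV hb]
    · refine ((isConsistent_nonMinAxiomOn _ _).insert hiv.symm ?_).insert hpv ?_ <;>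
        simp [hip.symm, hiv.symm]
    · simp [insert_subset_iff, hip.symm, hpv, hp]

lemma isCycleBlock_of_mem_cycleBlocks {V : Finset (Fin n)} (hV : V.Nonempty) :
    ∀ C ∈ cycleBlocks V, IsCycleBlock V C := by
  refine cycleBlocks_induction V hV (fun a => by simp [cycleBlocks_singleton]) ?_
  intro V p v hp hv hpv hCY ihv ihp C hC
  rw [hCY, Multiset.mem_add] at hC
  rcases hC with hC | hC
  exacts [isCycleBlock_of_mem_extendCycles hp hv hpv ihv C hC,
    isCycleBlock_of_mem_extendCycles hv hp hpv.symm ihp C hC]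

lemma isConsistent_of_mem_orderFamily {V : Finset (Fin n)} (hV : V.Nonempty) :
    ∀ E ∈ orderFamily V, IsConsistent E := by
  intro E hE
  rcases Multiset.mem_add.mp hE with hE | hE
  · obtain ⟨i, -, rfl⟩ := Multiset.mem_map.mp hE
    exact isConsistent_nonMinAxiomOn V i
  · exact (isCycleBlock_of_mem_cycleBlocks hV E hE).2.1

lemma nodup_orderFamily {V : Finset (Fin n)} (hV : V.Nonempty) : (orderFamily V).Nodup :=
  nodup_of_sum_wVal_eq_one (isConsistent_of_mem_orderFamily hV) fun _ hx => sum_orderFamily hV hx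

lemma isWeakening_of_mem_orderFamily_univ (hne : (univ : Finset (Fin n)).Nonempty)
    {E : Finset (Fin n × Fin n)} (hE : E ∈ orderFamily univ) : IsWeakening n E := by
  refine ⟨fun q hq => (isConsistent_of_mem_orderFamily hne E hE).fst_ne_snd hq, ?_⟩
  rcases Multiset.mem_add.mp hE with hE | hE
  · obtain ⟨i, -, rfl⟩ := Multiset.mem_map.mp hE
    exact Or.inl ⟨i, (nonMinAxiom_eq_nonMinAxiomOn_univ i).subset⟩
  · obtain ⟨-, hcons, i, j, k, htri⟩ := isCycleBlock_of_mem_cycleBlocks hne E hE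
    have hmem : (i, j) ∈ E ∧ (j, k) ∈ E ∧ (k, i) ∈ E := by
      simpa only [insert_subset_iff, singleton_subset_iff] using htri
    exact Or.inr ⟨i, j, k, hcons.fst_ne_snd hmem.1, hcons.fst_ne_snd hmem.2.1,
      (hcons.fst_ne_snd hmem.2.2).symm, htri⟩

end OrderingPrinciple

open OrderingPrinciple

/-- For n ≥ 3 there is a family of 2^n - n weakenings of the ordering
principle axioms, with 0/1 coefficients, whose sum is the constant function 1 on all
Boolean assignments. -/
theorem stmt16 (n : ℕ) (hn : 3 ≤ n) :
    ∃ F : Finset (Finset (Fin n × Fin n)),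
      (∀ E ∈ F, IsWeakening n E) ∧ F.card = 2 ^ n - n ∧
      ∀ x : Fin n → Fin n → Bool, (∀ i j : Fin n, i ≠ j → x j i = !x i j) →
        ∑ E ∈ F, wVal n E x = 1 := by
  have hne : (univ : Finset (Fin n)).Nonempty := univ_nonempty_iff.mpr ⟨⟨0, by omega⟩⟩
  refine ⟨⟨orderFamily univ, nodup_orderFamily hne⟩,
    fun E hE => isWeakening_of_mem_orderFamily_univ hne hE, ?_,
    fun x hx => sum_orderFamily hne hx⟩
  have hcard := card_orderFamily hne
  rw [card_univ, Fintype.card_fin] at hcard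
  exact Nat.eq_sub_of_add_eq hcard
end

section
/- Let x_{i,j} ∈ {0,1} for distinct i,j ∈ [n] with x_{j,i} = 1 − x_{i,j}. Define F_{j,m} = ∏_{i∈[m]\{j}} x_{j,i} for 1 ≤ j ≤ m ≤ n. Then for all 1 ≤ j ≤ m ≤ n−1: F_{j,m} = F_{j,m+1} + ∑_{k∈[m]\{j}} F_{j,m} x_{m+1,j} x_{k,m+1} ∏_{i∈[k−1]\{j}} x_{m+1,i} + F_{j,m} F_{m+1,m+1}, as functions on Boolean assignments. -/
/-- F_{j,m} = ∏_{i∈[m]∖{j}} x_{j,i}: indicator that j is first among {1,…,m}. -/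
noncomputable def Ford (x : ℕ → ℕ → ℝ) (j m : ℕ) : ℝ :=
  ∏ i ∈ (Finset.Icc 1 m).erase j, x j i

/-!
Since `F_{j,m+1} = x_{j,m+1} F_{j,m}` and `x_{j,m+1} = 1 - x_{m+1,j}`, it remains to split
`F_{j,m} x_{m+1,j}` according to the first `k ∈ [m] ∖ {j}` that beats `m+1`, if there is one;
if there is none, `m+1` beats all of `[m]` and the term is `F_{j,m} F_{m+1,m+1}`.
-/

open Finset

theorem sum_mul_prod_filter_lt_add_prod_eq_one {R ι : Type*} [CommRing R] [LinearOrder ι]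
    (x : ι → ι → R) (p : ι) (S : Finset ι) (hcomp : ∀ k ∈ S, x k p + x p k = 1) :
    ∑ k ∈ S, x k p * ∏ i ∈ S with i < k, x p i + ∏ i ∈ S, x p i = 1 := by
  have hsub : ∀ k ∈ S, 1 - x k p = x p k := fun k hk => by
    linear_combination -hcomp k hk
  have h := prod_one_sub_ordered S (x · p)
  rw [prod_congr rfl hsub,
    sum_congr rfl fun k _ => by rw [prod_congr rfl fun i hi => hsub i (mem_filter.1 hi).1]] at h
  rw [h]
  ring

theorem erase_Icc_one_pred_eq_filter_lt {j k m : ℕ} (hk : k ≤ m + 1) :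
    (Icc 1 (k - 1)).erase j = {i ∈ (Icc 1 m).erase j | i < k} := by
  ext i
  simp only [mem_erase, mem_Icc, mem_filter]
  omega

theorem Ford_succ {x : ℕ → ℕ → ℝ} {j : ℕ} (m : ℕ) (hj : j ≠ m + 1) :
    Ford x j (m + 1) = x j (m + 1) * Ford x j m := by
  rw [Ford, ← insert_Icc_right_eq_Icc_add_one (by omega), erase_insert_of_ne (Ne.symm hj),
    prod_insert (by simp), Ford]

theorem Ford_succ_self {x : ℕ → ℕ → ℝ} {j m : ℕ} (hj : j ∈ Icc 1 m) :
    Ford x (m + 1) (m + 1) = x (m + 1) j * ∏ i ∈ (Icc 1 m).erase j, x (m + 1) i := by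
  rw [Ford, ← insert_Icc_right_eq_Icc_add_one (by omega), erase_insert (by simp),
    mul_prod_erase _ _ hj]

theorem stmt17_general (x : ℕ → ℕ → ℝ)
    (hcomp : ∀ i j : ℕ, i ≠ j → x i j + x j i = 1)
    (j m : ℕ) (hj : 1 ≤ j) (hjm : j ≤ m) :
    Ford x j m = Ford x j (m + 1)
      + (∑ k ∈ (Finset.Icc 1 m).erase j,
          Ford x j m * x (m + 1) j * x k (m + 1) *
            ∏ i ∈ (Finset.Icc 1 (k - 1)).erase j, x (m + 1) i)
      + Ford x j m * Ford x (m + 1) (m + 1) := by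
  set S := (Icc 1 m).erase j
  have first_loss : ∑ k ∈ S, x k (m + 1) * ∏ i ∈ (Icc 1 (k - 1)).erase j, x (m + 1) i
      + ∏ i ∈ S, x (m + 1) i = 1 := by
    rw [← sum_mul_prod_filter_lt_add_prod_eq_one x (m + 1) S fun k hk =>
      hcomp k (m + 1) (by simp [S] at hk; omega)]
    refine congrArg (· + _) (sum_congr rfl fun k hk => ?_)
    rw [erase_Icc_one_pred_eq_filter_lt (m := m) (by simp [S] at hk; omega)]
  simp only [mul_assoc, ← mul_sum]
  rw [Ford_succ m (by omega), Ford_succ_self (mem_Icc.2 ⟨hj, hjm⟩)]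
  linear_combination (-Ford x j m) * (x (m + 1) j * first_loss + hcomp j (m + 1) (by omega))

/-- For Boolean x_{i,j} with x_{j,i} = 1 - x_{i,j} and 1 ≤ j ≤ m ≤ n-1,
F_{j,m} = F_{j,m+1} + ∑_{k∈[m]∖{j}} F_{j,m} x_{m+1,j} x_{k,m+1} ∏_{i∈[k-1]∖{j}} x_{m+1,i}
        + F_{j,m} F_{m+1,m+1}. -/
theorem stmt17 (n : ℕ) (hn : 2 ≤ n) (x : ℕ → ℕ → ℝ)
    (hbool : ∀ i j : ℕ, i ≠ j → x i j = 0 ∨ x i j = 1)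
    (hcomp : ∀ i j : ℕ, i ≠ j → x i j + x j i = 1)
    (j m : ℕ) (hj : 1 ≤ j) (hjm : j ≤ m) (hm : m ≤ n - 1) :
    Ford x j m = Ford x j (m + 1)
      + (∑ k ∈ (Finset.Icc 1 m).erase j,
          Ford x j m * x (m + 1) j * x k (m + 1) *
            ∏ i ∈ (Finset.Icc 1 (k - 1)).erase j, x (m + 1) i)
      + Ford x j m * Ford x (m + 1) (m + 1) :=
  stmt17_general x hcomp j m hj hjm
end

section
/- For the ordering principle on n elements, if coefficients c_W on weakenings satisfy ∑_W c_W W(x) = 1 for all Boolean assignments x having no minimum element, then there exist coefficients c'_W with ∑_W c'_W W(x) = 1 for all assignments x, and ∑_W |c'_W| ≤ (n+1)·(∑_W |c_W|) + n. -/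
/-! Let `S = ∑ᵢ Aᵢ` be the sum of the non-minimality axioms. On an antisymmetric assignment
at most one element is minimum, so `S` is the indicator of having a minimum element. Hence
`P - P·S + S` equals `1` everywhere when `P` equals `1` off that set, and expanding `P·S`
replaces each weakening `W` of `P` by the `n` weakenings `W ∪ Aᵢ`, with the same coefficient. -/

open Finset

variable {n : ℕ}

lemma wVal_eq_ite (E : Finset (Fin n × Fin n)) (x : Fin n → Fin n → Bool) :
    wVal n E x = if ∀ p ∈ E, x p.1 p.2 = true then 1 else 0 := by
  unfold wVal
  convert prod_boole

lemma wVal_union (E F : Finset (Fin n × Fin n)) (x : Fin n → Fin n → Bool) :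
    wVal n (E ∪ F) x = wVal n E x * wVal n F x := by
  simp only [wVal_eq_ite, forall_mem_union, ite_zero_mul_ite_zero, mul_one]

lemma wVal_nonMinAxiom (i : Fin n) (x : Fin n → Fin n → Bool) :
    wVal n (nonMinAxiom n i) x = if ∀ j, j ≠ i → x i j = true then 1 else 0 := by
  simp [wVal_eq_ite, nonMinAxiom]

lemma fst_ne_snd_of_mem_nonMinAxiom {i : Fin n} {p : Fin n × Fin n}
    (hp : p ∈ nonMinAxiom n i) : p.1 ≠ p.2 := by
  simp only [nonMinAxiom, mem_image, mem_filter] at hp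
  obtain ⟨j, ⟨-, hji⟩, rfl⟩ := hp
  exact hji.symm

lemma isWeakening_nonMinAxiom (i : Fin n) : IsWeakening n (nonMinAxiom n i) :=
  ⟨fun _ => fst_ne_snd_of_mem_nonMinAxiom, Or.inl ⟨i, subset_rfl⟩⟩

lemma IsWeakening.union {E F : Finset (Fin n × Fin n)} (hE : IsWeakening n E)
    (hF : ∀ p ∈ F, p.1 ≠ p.2) : IsWeakening n (E ∪ F) := by
  refine ⟨fun p hp => (mem_union.mp hp).elim (hE.1 p) (hF p), ?_⟩
  rcases hE.2 with ⟨i, hi⟩ | ⟨i, j, k, hij, hjk, hik, hijk⟩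
  · exact Or.inl ⟨i, hi.trans subset_union_left⟩
  · exact Or.inr ⟨i, j, k, hij, hjk, hik, hijk.trans subset_union_left⟩

lemma sum_wVal_nonMinAxiom (x : Fin n → Fin n → Bool)
    (hx : ∀ i j : Fin n, i ≠ j → x j i = !x i j) :
    ∑ i, wVal n (nonMinAxiom n i) x =
      if ∃ i : Fin n, ∀ j, j ≠ i → x i j = true then 1 else 0 := by
  simp only [wVal_nonMinAxiom]
  split_ifs with hmin
  · obtain ⟨i₀, hi₀⟩ := hmin
    have unique : ∀ i ≠ i₀, ¬ ∀ j, j ≠ i → x i j = true := fun i hi hi' => by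
      simpa [hi' i₀ hi.symm, hi₀ i hi] using hx i i₀ hi
    rw [sum_eq_single i₀ (fun i _ hi => if_neg (unique i hi)) (by simp), if_pos hi₀]
  · exact sum_eq_zero fun i _ => if_neg fun hi => hmin ⟨i, hi⟩

def HasWeakeningCombination (n : ℕ) (F : (Fin n → Fin n → Bool) → ℝ) (s : ℝ) : Prop :=
  ∃ (𝒲 : Finset (Finset (Fin n × Fin n))) (c : Finset (Fin n × Fin n) → ℝ),
    (∀ E ∈ 𝒲, IsWeakening n E) ∧ (∀ x, ∑ E ∈ 𝒲, c E * wVal n E x = F x) ∧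
      ∑ E ∈ 𝒲, |c E| ≤ s

namespace HasWeakeningCombination

variable {F G : (Fin n → Fin n → Bool) → ℝ} {s t : ℝ}

lemma mono (hF : HasWeakeningCombination n F s) (hst : s ≤ t) :
    HasWeakeningCombination n F t := by
  obtain ⟨𝒲, c, hW, hc, hs⟩ := hF
  exact ⟨𝒲, c, hW, hc, hs.trans hst⟩

lemma zero : HasWeakeningCombination n (fun _ => 0) 0 :=
  ⟨∅, 0, by simp, by simp, by simp⟩

lemma of_isWeakening {E : Finset (Fin n × Fin n)} (hE : IsWeakening n E) :
    HasWeakeningCombination n (wVal n E) 1 :=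
  ⟨{E}, 1, by simpa using hE, by simp, by simp⟩

lemma add (hF : HasWeakeningCombination n F s) (hG : HasWeakeningCombination n G t) :
    HasWeakeningCombination n (fun x => F x + G x) (s + t) := by
  obtain ⟨𝒲, c, hW, hc, hs⟩ := hF
  obtain ⟨𝒱, d, hV, hd, ht⟩ := hG
  have extend : ∀ (𝒰 : Finset (Finset (Fin n × Fin n))) (f : Finset (Fin n × Fin n) → ℝ),
      𝒰 ⊆ 𝒲 ∪ 𝒱 → ∑ E ∈ 𝒲 ∪ 𝒱, (if E ∈ 𝒰 then f E else 0) = ∑ E ∈ 𝒰, f E :=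
    fun 𝒰 f h => by rw [sum_ite_mem, inter_eq_right.mpr h]
  refine ⟨𝒲 ∪ 𝒱, fun E => (if E ∈ 𝒲 then c E else 0) + (if E ∈ 𝒱 then d E else 0),
    fun E hE => (mem_union.mp hE).elim (hW E) (hV E), fun x => ?_, ?_⟩
  · simp only [add_mul, ite_mul, zero_mul, sum_add_distrib]
    rw [extend 𝒲 _ subset_union_left, extend 𝒱 _ subset_union_right, hc, hd]
  · calc ∑ E ∈ 𝒲 ∪ 𝒱, |(if E ∈ 𝒲 then c E else 0) + (if E ∈ 𝒱 then d E else 0)|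
        ≤ ∑ E ∈ 𝒲 ∪ 𝒱, ((if E ∈ 𝒲 then |c E| else 0) + (if E ∈ 𝒱 then |d E| else 0)) :=
          sum_le_sum fun E _ => by
            simpa only [apply_ite abs, abs_zero] using
              abs_add_le (if E ∈ 𝒲 then c E else 0) (if E ∈ 𝒱 then d E else 0)
      _ ≤ s + t := by
          rw [sum_add_distrib, extend 𝒲 _ subset_union_left, extend 𝒱 _ subset_union_right]
          exact add_le_add hs ht

lemma const_mul (hF : HasWeakeningCombination n F s) (r : ℝ) :
    HasWeakeningCombination n (fun x => r * F x) (|r| * s) := by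
  obtain ⟨𝒲, c, hW, hc, hs⟩ := hF
  refine ⟨𝒲, fun E => r * c E, hW, fun x => ?_, ?_⟩
  · simp only [mul_assoc, ← mul_sum, hc]
  · simp only [abs_mul, ← mul_sum]
    exact mul_le_mul_of_nonneg_left hs (abs_nonneg r)

lemma sub (hF : HasWeakeningCombination n F s) (hG : HasWeakeningCombination n G t) :
    HasWeakeningCombination n (fun x => F x - G x) (s + t) := by
  simpa [sub_eq_add_neg] using hF.add (hG.const_mul (-1))

lemma sum {ι : Type*} (I : Finset ι) {F : ι → (Fin n → Fin n → Bool) → ℝ} {s : ι → ℝ}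
    (hF : ∀ i ∈ I, HasWeakeningCombination n (F i) (s i)) :
    HasWeakeningCombination n (fun x => ∑ i ∈ I, F i x) (∑ i ∈ I, s i) := by
  classical
  induction I using Finset.induction_on with
  | empty => simpa using zero
  | insert i I hi ih =>
    simp only [sum_insert hi]
    exact (hF i (mem_insert_self i I)).add (ih fun j hj => hF j (mem_insert_of_mem hj))

lemma mul_wVal (hF : HasWeakeningCombination n F s) {G : Finset (Fin n × Fin n)}
    (hG : ∀ p ∈ G, p.1 ≠ p.2) :
    HasWeakeningCombination n (fun x => F x * wVal n G x) s := by
  obtain ⟨𝒲, c, hW, hc, hs⟩ := hF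
  have hFG : (fun x => F x * wVal n G x) = fun x => ∑ E ∈ 𝒲, c E * wVal n (E ∪ G) x := by
    ext x
    simp only [← hc x, sum_mul, wVal_union, mul_assoc]
  rw [hFG]
  refine (HasWeakeningCombination.sum 𝒲 fun E hE =>
    (of_isWeakening ((hW E hE).union hG)).const_mul (c E)).mono ?_
  simpa using hs

end HasWeakeningCombination

theorem stmt19_general (n : ℕ)
    (𝒲 : Finset (Finset (Fin n × Fin n))) (c : Finset (Fin n × Fin n) → ℝ)
    (hW : ∀ E ∈ 𝒲, IsWeakening n E)
    (hproof : ∀ x : Fin n → Fin n → Bool, (∀ i j : Fin n, i ≠ j → x j i = !x i j) →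
      (¬ ∃ i : Fin n, ∀ j : Fin n, j ≠ i → x i j = true) →
      ∑ E ∈ 𝒲, c E * wVal n E x = 1) :
    ∃ (𝒲' : Finset (Finset (Fin n × Fin n))) (c' : Finset (Fin n × Fin n) → ℝ),
      (∀ E ∈ 𝒲', IsWeakening n E) ∧
      (∀ x : Fin n → Fin n → Bool, (∀ i j : Fin n, i ≠ j → x j i = !x i j) →
        ∑ E ∈ 𝒲', c' E * wVal n E x = 1) ∧
      ∑ E ∈ 𝒲', |c' E| ≤ (n + 1 : ℝ) * (∑ E ∈ 𝒲, |c E|) + n := by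
  have hP : HasWeakeningCombination n (fun x => ∑ E ∈ 𝒲, c E * wVal n E x) (∑ E ∈ 𝒲, |c E|) :=
    ⟨𝒲, c, hW, fun _ => rfl, le_rfl⟩
  have hS : HasWeakeningCombination n (fun x => ∑ i, wVal n (nonMinAxiom n i) x) n := by
    simpa using HasWeakeningCombination.sum univ fun i _ =>
      HasWeakeningCombination.of_isWeakening (isWeakening_nonMinAxiom i)
  have hPS : HasWeakeningCombination n
      (fun x => (∑ E ∈ 𝒲, c E * wVal n E x) * ∑ i, wVal n (nonMinAxiom n i) x)
      (n * ∑ E ∈ 𝒲, |c E|) := by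
    simpa [mul_sum] using HasWeakeningCombination.sum univ fun i _ =>
      hP.mul_wVal fun _ => fst_ne_snd_of_mem_nonMinAxiom (i := i)
  obtain ⟨𝒲', c', hW', hc', hbound⟩ := ((hP.sub hPS).add hS).mono
    (t := (n + 1 : ℝ) * (∑ E ∈ 𝒲, |c E|) + n) (le_of_eq (by ring))
  refine ⟨𝒲', c', hW', fun x hx => ?_, hbound⟩
  simp only [hc', sum_wVal_nonMinAxiom x hx]
  split_ifs with hmin
  · ring
  · rw [hproof x hx hmin]; ring

/-- If coefficients c_W on weakenings give ∑ c_W W(x) = 1 on all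
assignments x with no minimum element, then there are coefficients c'_W with
∑ c'_W W(x) = 1 on all assignments and ∑|c'_W| ≤ (n+1)·∑|c_W| + n. -/
theorem stmt19 (n : ℕ) (hn : 2 ≤ n)
    (𝒲 : Finset (Finset (Fin n × Fin n))) (c : Finset (Fin n × Fin n) → ℝ)
    (hW : ∀ E ∈ 𝒲, IsWeakening n E)
    (hproof : ∀ x : Fin n → Fin n → Bool, (∀ i j : Fin n, i ≠ j → x j i = !x i j) →
      (¬ ∃ i : Fin n, ∀ j : Fin n, j ≠ i → x i j = true) →
      ∑ E ∈ 𝒲, c E * wVal n E x = 1) :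
    ∃ (𝒲' : Finset (Finset (Fin n × Fin n))) (c' : Finset (Fin n × Fin n) → ℝ),
      (∀ E ∈ 𝒲', IsWeakening n E) ∧
      (∀ x : Fin n → Fin n → Bool, (∀ i j : Fin n, i ≠ j → x j i = !x i j) →
        ∑ E ∈ 𝒲', c' E * wVal n E x = 1) ∧
      ∑ E ∈ 𝒲', |c' E| ≤ (n + 1 : ℝ) * (∑ E ∈ 𝒲, |c E|) + n :=
  stmt19_general n 𝒲 c hW hproof
end
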